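/- Let p and q be distinct odd primes with q > p. In the graph BS(Γ(Z_{pq})), for any two distinct vertices a, a' in A and any vertex x with x ≠ a and x ≠ a', if d(a, x) ≠ 1 and d(a', x) ≠ 1, then d(a, x) = d(a', x), where d denotes the graph distance in BS(Γ(Z_{pq})). -/

import Mathlib

open SimpleGraph

/-- Vertices of the zero divisor graph of `ZMod n`: nonzero zero divisors. -/
def ZDVertex (n : ℕ) : Type :=
  {x : ZMod n // x ≠ 0 ∧ ∃ y : ZMod n, y ≠ 0 ∧ x * y = 0}

/-- The zero divisor graph of `ZMod n`. -/
def zdGraph (n : ℕ) : SimpleGraph (ZDVertex n) where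
  Adj a b := a ≠ b ∧ a.1 * b.1 = 0
  symm := by
    constructor
    rintro a b ⟨hne, h⟩
    exact ⟨hne.symm, by rwa [mul_comm]⟩
  loopless := by
    constructor
    rintro a ⟨hne, -⟩
    exact hne rfl

/-- Vertex type of the barycentric subdivision: original vertices plus one
vertex for each edge. -/
def BSVertex {V : Type*} (G : SimpleGraph V) : Type _ := V ⊕ G.edgeSet

/-- The barycentric subdivision of a simple graph: each edge `uv` is replaced
by a path `u – w_{uv} – v` through the new vertex corresponding to the edge. -/
def BS {V : Type*} (G : SimpleGraph V) : SimpleGraph (BSVertex G) where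
  Adj x y :=
    (∃ (v : V) (e : G.edgeSet), x = Sum.inl v ∧ y = Sum.inr e ∧ v ∈ (e : Sym2 V)) ∨
    (∃ (v : V) (e : G.edgeSet), x = Sum.inr e ∧ y = Sum.inl v ∧ v ∈ (e : Sym2 V))
  symm := by
    constructor
    rintro x y (⟨v, e, rfl, rfl, h⟩ | ⟨v, e, rfl, rfl, h⟩)
    · exact Or.inr ⟨v, e, rfl, rfl, h⟩
    · exact Or.inl ⟨v, e, rfl, rfl, h⟩
  loopless := by
    constructor
    rintro x (⟨v, e, rfl, h, -⟩ | ⟨v, e, rfl, h, -⟩) <;> simp at h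

/-- `W` is a resolving set for `G`. -/
def IsResolving {V : Type*} (G : SimpleGraph V) (W : Set V) : Prop :=
  ∀ x y : V, x ≠ y → ∃ w ∈ W, G.dist x w ≠ G.dist y w

/-- The metric dimension of `G`: minimum cardinality of a resolving set. -/
noncomputable def metricDim {V : Type*} (G : SimpleGraph V) : ℕ :=
  sInf {k : ℕ | ∃ W : Set V, IsResolving G W ∧ W.ncard = k}

/-- `W` is a metric basis of `G`: a resolving set of minimum cardinality. -/
def IsMetricBasis {V : Type*} (G : SimpleGraph V) (W : Set V) : Prop :=
  IsResolving G W ∧ W.ncard = metricDim G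

/-- `W` is a fault-tolerant resolving set for `G`. -/
def IsFTResolving {V : Type*} (G : SimpleGraph V) (W : Set V) : Prop :=
  IsResolving G W ∧ ∀ w ∈ W, IsResolving G (W \ {w})

/-- The fault-tolerant metric dimension of `G`. -/
noncomputable def ftMetricDim {V : Type*} (G : SimpleGraph V) : ℕ :=
  sInf {k : ℕ | ∃ W : Set V, IsFTResolving G W ∧ W.ncard = k}

/-- The set `U` of original vertices of `Γ(Z_{pq})`, viewed inside the
barycentric subdivision, that are nonzero multiples of `q` in `Z_{pq}`. -/
def USet (p q : ℕ) : Set (BSVertex (zdGraph (p * q))) :=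
  {x | ∃ v : ZDVertex (p * q), x = Sum.inl v ∧
      ∃ k : ZMod (p * q), v.1 = (q : ZMod (p * q)) * k}

/-- The set `A` of original vertices of `Γ(Z_{pq})`, viewed inside the
barycentric subdivision, that are nonzero multiples of `p` in `Z_{pq}`. -/
def ASet (p q : ℕ) : Set (BSVertex (zdGraph (p * q))) :=
  {x | ∃ v : ZDVertex (p * q), x = Sum.inl v ∧
      ∃ k : ZMod (p * q), v.1 = (p : ZMod (p * q)) * k}
/-!
Every nonzero zero divisor of `ZMod (p * q)` is a multiple of exactly one of `p`, `q`, and two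
such vertices are adjacent iff one is a multiple of `p` and the other of `q`: `Γ(Z_{pq})` is
complete bipartite. Walks in a barycentric subdivision alternate between original and edge
vertices, so distances between original vertices are even and those to edge vertices odd. Hence
from a multiple `a` of `p` the distance is `2` to every multiple of `q`, `4` to every other
multiple of `p` (through a common neighbour, but not `2` as they are not adjacent), and `3` to
every edge vertex not incident to `a` (each edge has an endpoint that is a multiple of `q`).
These values do not depend on `a`.
-/

namespace BS

variable {V : Type*} {G : SimpleGraph V}

lemma adj_inl_iff {v : V} {y : BSVertex G} :
    (BS G).Adj (Sum.inl v) y ↔ ∃ e : G.edgeSet, y = Sum.inr e ∧ v ∈ (e : Sym2 V) := by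
  constructor
  · rintro (⟨v', e, hv, rfl, hm⟩ | ⟨_, _, hv, -, -⟩)
    · cases Sum.inl_injective hv
      exact ⟨e, rfl, hm⟩
    · cases hv
  · rintro ⟨e, rfl, hm⟩
    exact Or.inl ⟨v, e, rfl, rfl, hm⟩

lemma adj_inl_inr_iff {v : V} {e : G.edgeSet} :
    (BS G).Adj (Sum.inl v) (Sum.inr e) ↔ v ∈ (e : Sym2 V) := by
  refine ⟨fun h ↦ ?_, fun h ↦ Or.inl ⟨v, e, rfl, rfl, h⟩⟩
  obtain ⟨e', he, hm⟩ := adj_inl_iff.1 h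
  cases Sum.inr_injective he
  exact hm

lemma isLeft_eq_not_of_adj {x y : BSVertex G} (h : (BS G).Adj x y) :
    x.isLeft = !y.isLeft := by
  rcases h with ⟨v, e, rfl, rfl, -⟩ | ⟨v, e, rfl, rfl, -⟩ <;> rfl

lemma even_length_iff {x y : BSVertex G} (w : (BS G).Walk x y) :
    Even w.length ↔ x.isLeft = y.isLeft := by
  induction w with
  | nil => simp
  | @cons _ y z h w ih =>
    rw [Walk.length_cons, Nat.even_add_one, ih, isLeft_eq_not_of_adj h]
    cases y.isLeft <;> cases z.isLeft <;> decide

lemma even_dist_iff {x y : BSVertex G} (h : (BS G).Reachable x y) :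
    Even ((BS G).dist x y) ↔ x.isLeft = y.isLeft := by
  obtain ⟨w, hw⟩ := h.exists_walk_length_eq_dist
  rw [← hw, even_length_iff]

def walkOfAdj {u v : V} (h : G.Adj u v) : (BS G).Walk (Sum.inl u) (Sum.inl v) :=
  .cons (adj_inl_inr_iff (e := ⟨s(u, v), h⟩).2 (Sym2.mem_mk_left u v))
    (.cons (adj_inl_inr_iff (e := ⟨s(u, v), h⟩).2 (Sym2.mem_mk_right u v)).symm .nil)

lemma length_walkOfAdj {u v : V} (h : G.Adj u v) : (walkOfAdj h).length = 2 := rfl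

lemma dist_inl_inl_of_adj {u v : V} (h : G.Adj u v) :
    (BS G).dist (Sum.inl u) (Sum.inl v) = 2 := by
  have hreach := (walkOfAdj h).reachable
  have hle := (BS G).dist_le (walkOfAdj h)
  have hpos := hreach.pos_dist_of_ne fun h' ↦ h.ne (Sum.inl_injective h')
  have heven := Nat.even_iff.1 ((even_dist_iff hreach).2 rfl)
  rw [length_walkOfAdj] at hle
  omega

lemma adj_of_dist_inl_inl_eq_two {u v : V} (h : (BS G).dist (Sum.inl u) (Sum.inl v) = 2) :
    G.Adj u v := by
  have hedist : (BS G).edist (Sum.inl u) (Sum.inl v) = 2 := by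
    have hreach : (BS G).Reachable (Sum.inl u) (Sum.inl v) := .of_dist_ne_zero (by omega)
    exact_mod_cast h ▸ hreach.coe_dist_eq_edist.symm
  obtain ⟨huv, -, b, hub, hvb⟩ := edist_eq_two_iff.1 hedist
  obtain ⟨e, rfl, hu⟩ := adj_inl_iff.1 hub
  exact G.adj_iff_exists_edge.2
    ⟨fun h ↦ huv (congrArg _ h), e, e.2, hu, adj_inl_inr_iff.1 hvb⟩

lemma dist_inl_inl_of_not_adj_of_adj_of_adj {u v w : V} (huv : u ≠ v) (hn : ¬ G.Adj u v)
    (huw : G.Adj u w) (hwv : G.Adj w v) : (BS G).dist (Sum.inl u) (Sum.inl v) = 4 := by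
  let path := (walkOfAdj huw).append (walkOfAdj hwv)
  have hle : (BS G).dist (Sum.inl u) (Sum.inl v) ≤ 4 := (BS G).dist_le path
  have hpos := path.reachable.pos_dist_of_ne fun h ↦ huv (Sum.inl_injective h)
  have heven := Nat.even_iff.1 ((even_dist_iff path.reachable).2 rfl)
  have hne_two := mt adj_of_dist_inl_inl_eq_two hn
  omega

lemma dist_inl_inr_of_adj_of_mem {u v : V} {e : G.edgeSet} (hv : v ∉ (e : Sym2 V))
    (hvu : G.Adj v u) (hu : u ∈ (e : Sym2 V)) : (BS G).dist (Sum.inl v) (Sum.inr e) = 3 := by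
  let path := (walkOfAdj hvu).concat (adj_inl_inr_iff.2 hu)
  have hle : (BS G).dist (Sum.inl v) (Sum.inr e) ≤ 3 := (BS G).dist_le path
  have hodd : ¬ Even ((BS G).dist (Sum.inl v) (Sum.inr e)) := by
    simp [even_dist_iff path.reachable]
  have hne_one := mt dist_eq_one_iff_adj.1 (mt adj_inl_inr_iff.1 hv)
  rw [Nat.not_even_iff] at hodd
  omega

end BS

namespace ZMod

variable {m n : ℕ}

lemma natCast_dvd_iff_dvd_val [NeZero n] (hm : m ∣ n) {x : ZMod n} :
    (m : ZMod n) ∣ x ↔ m ∣ x.val := by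
  constructor
  · rintro ⟨k, rfl⟩
    rw [← natCast_zmod_val k, ← Nat.cast_mul, val_natCast]
    exact (Nat.dvd_mod_iff hm).2 (dvd_mul_right m k.val)
  · rintro ⟨c, hc⟩
    exact ⟨c, by rw [← natCast_zmod_val x, hc, Nat.cast_mul]⟩

lemma natCast_dvd_or_natCast_dvd_of_mul_eq_zero [NeZero n] (hm : m.Prime) (hmn : m ∣ n)
    {x y : ZMod n} (h : x * y = 0) : (m : ZMod n) ∣ x ∨ (m : ZMod n) ∣ y := by
  simp only [natCast_dvd_iff_dvd_val hmn]
  refine hm.dvd_mul.1 (hmn.trans ((natCast_eq_zero_iff _ _).1 ?_))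
  rwa [Nat.cast_mul, natCast_zmod_val, natCast_zmod_val]

lemma eq_zero_of_natCast_dvd_of_natCast_dvd {p q : ℕ} (hpq : p.Coprime q) {x : ZMod (p * q)}
    (hp : (p : ZMod (p * q)) ∣ x) (hq : (q : ZMod (p * q)) ∣ x) : x = 0 := by
  have hco : IsCoprime (p : ZMod (p * q)) q := by
    simpa using (Nat.isCoprime_iff_coprime.2 hpq).map (Int.castRingHom (ZMod (p * q)))
  simpa [← Nat.cast_mul] using hco.mul_dvd hp hq

lemma natCast_ne_zero_of_pos_of_lt (hm : 0 < m) (hmn : m < n) : (m : ZMod n) ≠ 0 := by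
  rw [Ne, natCast_eq_zero_iff]
  exact Nat.not_dvd_of_pos_of_lt hm hmn

end ZMod

section ZeroDivisorGraph

variable {p q : ℕ}

lemma ZDVertex.natCast_dvd_or_natCast_dvd [NeZero (p * q)] (hp : p.Prime) (hq : q.Prime)
    (hpq : p.Coprime q) (v : ZDVertex (p * q)) :
    (p : ZMod (p * q)) ∣ v.1 ∨ (q : ZMod (p * q)) ∣ v.1 := by
  obtain ⟨x, -, y, hy, hxy⟩ := v
  refine (ZMod.natCast_dvd_or_natCast_dvd_of_mul_eq_zero hp (dvd_mul_right p q) hxy).imp_right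
    fun hpy ↦ ?_
  refine (ZMod.natCast_dvd_or_natCast_dvd_of_mul_eq_zero hq (dvd_mul_left q p) hxy).resolve_right
    fun hqy ↦ ?_
  exact hy (ZMod.eq_zero_of_natCast_dvd_of_natCast_dvd hpq hpy hqy)

lemma zdGraph_adj_of_natCast_dvd (hpq : p.Coprime q) {a u : ZDVertex (p * q)}
    (ha : (p : ZMod (p * q)) ∣ a.1) (hu : (q : ZMod (p * q)) ∣ u.1) :
    (zdGraph (p * q)).Adj a u := by
  refine ⟨fun h ↦ a.2.1 (ZMod.eq_zero_of_natCast_dvd_of_natCast_dvd hpq ha (h ▸ hu)), ?_⟩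
  simpa [← Nat.cast_mul] using mul_dvd_mul ha hu

lemma zdGraph_not_adj_of_natCast_dvd [NeZero (p * q)] (hq : q.Prime) (hpq : p.Coprime q)
    {a b : ZDVertex (p * q)} (ha : (p : ZMod (p * q)) ∣ a.1) (hb : (p : ZMod (p * q)) ∣ b.1) :
    ¬ (zdGraph (p * q)).Adj a b := by
  rintro ⟨-, hab⟩
  rcases ZMod.natCast_dvd_or_natCast_dvd_of_mul_eq_zero hq (dvd_mul_left q p) hab with hqa | hqb
  · exact a.2.1 (ZMod.eq_zero_of_natCast_dvd_of_natCast_dvd hpq ha hqa)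
  · exact b.2.1 (ZMod.eq_zero_of_natCast_dvd_of_natCast_dvd hpq hb hqb)

lemma exists_zdVertex_natCast_dvd (hp : 1 < p) (hq : 1 < q) :
    ∃ u : ZDVertex (p * q), (q : ZMod (p * q)) ∣ u.1 :=
  ⟨⟨q, ZMod.natCast_ne_zero_of_pos_of_lt (by omega) (by nlinarith), p,
    ZMod.natCast_ne_zero_of_pos_of_lt (by omega) (by nlinarith),
    by rw [← Nat.cast_mul, mul_comm, ZMod.natCast_self]⟩, dvd_rfl⟩

lemma zdGraph_exists_mem_natCast_dvd [NeZero (p * q)] (hp : p.Prime) (hq : q.Prime)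
    (hpq : p.Coprime q) {e : Sym2 (ZDVertex (p * q))} (he : e ∈ (zdGraph (p * q)).edgeSet) :
    ∃ u ∈ e, (q : ZMod (p * q)) ∣ u.1 := by
  induction e using Sym2.ind with
  | h a b =>
    rcases a.natCast_dvd_or_natCast_dvd hp hq hpq with ha | ha
    · rcases b.natCast_dvd_or_natCast_dvd hp hq hpq with hb | hb
      · exact absurd he (zdGraph_not_adj_of_natCast_dvd hq hpq ha hb)
      · exact ⟨b, Sym2.mem_mk_right a b, hb⟩
    · exact ⟨a, Sym2.mem_mk_left a b, ha⟩

lemma dist_BS_zdGraph_inl_inl_eq_four [NeZero (p * q)] (hp : p.Prime) (hq : q.Prime)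
    (hpq : p.Coprime q) {a b : ZDVertex (p * q)} (ha : (p : ZMod (p * q)) ∣ a.1)
    (hb : (p : ZMod (p * q)) ∣ b.1) (hab : a ≠ b) :
    (BS (zdGraph (p * q))).dist (Sum.inl a) (Sum.inl b) = 4 := by
  obtain ⟨u, hu⟩ := exists_zdVertex_natCast_dvd hp.one_lt hq.one_lt
  exact BS.dist_inl_inl_of_not_adj_of_adj_of_adj hab (zdGraph_not_adj_of_natCast_dvd hq hpq ha hb)
    (zdGraph_adj_of_natCast_dvd hpq ha hu) (zdGraph_adj_of_natCast_dvd hpq hb hu).symm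

lemma dist_BS_zdGraph_inl_inr_eq_three [NeZero (p * q)] (hp : p.Prime) (hq : q.Prime)
    (hpq : p.Coprime q) {a : ZDVertex (p * q)} (ha : (p : ZMod (p * q)) ∣ a.1)
    {e : (zdGraph (p * q)).edgeSet} (hae : a ∉ (e : Sym2 (ZDVertex (p * q)))) :
    (BS (zdGraph (p * q))).dist (Sum.inl a) (Sum.inr e) = 3 := by
  obtain ⟨u, hue, hu⟩ := zdGraph_exists_mem_natCast_dvd hp hq hpq e.2
  exact BS.dist_inl_inr_of_adj_of_mem hae (zdGraph_adj_of_natCast_dvd hpq ha hu) hue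

end ZeroDivisorGraph

theorem dist_eq_of_ne_one_ASet_general (p q : ℕ) (hp : p.Prime) (hq : q.Prime)
    (hne : p ≠ q)
    (a a' x : BSVertex (zdGraph (p * q))) (ha : a ∈ ASet p q) (ha' : a' ∈ ASet p q)
    (hxa : x ≠ a) (hxa' : x ≠ a')
    (h1 : (BS (zdGraph (p * q))).dist a x ≠ 1)
    (h2 : (BS (zdGraph (p * q))).dist a' x ≠ 1) :
    (BS (zdGraph (p * q))).dist a x = (BS (zdGraph (p * q))).dist a' x := by
  have : NeZero (p * q) := ⟨(Nat.mul_pos hp.pos hq.pos).ne'⟩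
  have hpq : p.Coprime q := (Nat.coprime_primes hp hq).2 hne
  -- membership in `ASet p q` unfolds to `(p : ZMod (p * q)) ∣ a.1`
  obtain ⟨a, rfl, ha⟩ := ha
  obtain ⟨a', rfl, ha'⟩ := ha'
  cases x with
  | inl v =>
    rcases v.natCast_dvd_or_natCast_dvd hp hq hpq with hv | hv
    · rw [dist_BS_zdGraph_inl_inl_eq_four hp hq hpq ha hv fun h ↦ hxa (h ▸ rfl),
        dist_BS_zdGraph_inl_inl_eq_four hp hq hpq ha' hv fun h ↦ hxa' (h ▸ rfl)]
    · rw [BS.dist_inl_inl_of_adj (zdGraph_adj_of_natCast_dvd hpq ha hv),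
        BS.dist_inl_inl_of_adj (zdGraph_adj_of_natCast_dvd hpq ha' hv)]
  | inr e =>
    have hae : a ∉ (e : Sym2 _) := fun h ↦ h1 (dist_eq_one_iff_adj.2 (BS.adj_inl_inr_iff.2 h))
    have ha'e : a' ∉ (e : Sym2 _) := fun h ↦ h2 (dist_eq_one_iff_adj.2 (BS.adj_inl_inr_iff.2 h))
    rw [dist_BS_zdGraph_inl_inr_eq_three hp hq hpq ha hae,
      dist_BS_zdGraph_inl_inr_eq_three hp hq hpq ha' ha'e]

theorem dist_eq_of_ne_one_ASet (p q : ℕ) (hp : p.Prime) (hq : q.Prime)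
    (hpodd : Odd p) (hqodd : Odd q) (hne : p ≠ q) (hpq : q > p)
    (a a' x : BSVertex (zdGraph (p * q))) (ha : a ∈ ASet p q) (ha' : a' ∈ ASet p q)
    (haa' : a ≠ a') (hxa : x ≠ a) (hxa' : x ≠ a')
    (h1 : (BS (zdGraph (p * q))).dist a x ≠ 1)
    (h2 : (BS (zdGraph (p * q))).dist a' x ≠ 1) :
    (BS (zdGraph (p * q))).dist a x = (BS (zdGraph (p * q))).dist a' x :=
  dist_eq_of_ne_one_ASet_general p q hp hq hne a a' x ha ha' hxa hxa' h1 h2
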